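/- Under the assumptions guaranteeing almost sure convergence of X_t = ∑_{i=1}^∞ G_i(λ_i t) S_i with deterministic initial values, the semigroup of X admits the Mehler representation E_{X₀}[F(X_t)] = ∫ F(T_t X₀ + y) μ_t(dy) for all t > 0 and all bounded continuous functions F on C₀([0,1];ℝ^d), where T_t(∑ y_i S_i) = ∑ y_i e^{-λ_i t} S_i and μ_t is the image of the Wiener measure under U_t(∑ y_i S_i) = ∑ y_i (1 - e^{-2λ_i t})^{1/2} S_i. -/

import Mathlib

open MeasureTheory ProbabilityTheory Real

/-- The Schauder function of index `r` (scalar case): `S_1(s) = s`, and for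
`r = 2^m + k`, `1 ≤ k ≤ 2^m`, the tent function of height `2^{-(m+2)/2}` centered at
`(2k-1)/2^{m+1}`, i.e. the primitive of the Haar function `H_r`. -/
noncomputable def schauderScalar (r : ℕ) (s : ℝ) : ℝ :=
  if r = 1 then s
  else
    (2 : ℝ) ^ ((Nat.log 2 (r - 1) : ℝ) / 2) *
      max 0 ((2 : ℝ) ^ (-(Nat.log 2 (r - 1) : ℝ) - 1) -
        |s - (2 * ((r - 2 ^ Nat.log 2 (r - 1) : ℕ) : ℝ) - 1) / 2 ^ (Nat.log 2 (r - 1) + 1)|)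

/-- The `ℝ^d`-valued Schauder functions `S_{d(r-1)+j} = S_r · e_j`. -/
noncomputable def schauder (d i : ℕ) (s : ℝ) : Fin d → ℝ :=
  fun j => if (i - 1) % d = (j : ℕ) then schauderScalar ((i - 1) / d + 1) s else 0

/-- The sup-norm of a path `[0,1] → ℝ^d`. -/
noncomputable def nsup (d : ℕ) (f : ℝ → Fin d → ℝ) : ℝ :=
  ⨆ s ∈ Set.Icc (0 : ℝ) 1, ‖f s‖

/-- The `L¹([0,1];ℝ^d)`-norm of a path. -/
noncomputable def nl1 (d : ℕ) (f : ℝ → Fin d → ℝ) : ℝ :=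
  ∑ j : Fin d, ∫ x in (0 : ℝ)..1, |f x j|

/-- `W` is a standard one-dimensional Brownian motion under `P`: it starts at `0`, has
continuous paths, Gaussian increments `W_t - W_s ∼ N(0, t-s)`, and independent
increments. -/
def IsStdBM {Ω : Type*} [MeasurableSpace Ω] (P : Measure Ω) (W : ℝ → Ω → ℝ) : Prop :=
  (∀ ω, W 0 ω = 0) ∧
  (∀ ω, Continuous fun t => W t ω) ∧
  (∀ s t : ℝ, 0 ≤ s → s ≤ t →
    Measure.map (fun ω => W t ω - W s ω) P = gaussianReal 0 (Real.toNNReal (t - s))) ∧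
  (∀ t : ℕ → ℝ, Monotone t →
    iIndepFun (fun n ω => W (t (n + 1)) ω - W (t n) ω) P)

theorem continuous_schauderScalar (r : ℕ) : Continuous (schauderScalar r) := by
  by_cases h : r = 1
  · simp only [schauderScalar, h, if_true]
    exact continuous_id
  · unfold schauderScalar
    simp only [if_neg h]
    exact continuous_const.mul (continuous_const.max
      (continuous_const.sub ((continuous_id.sub continuous_const).abs)))

/-- The Schauder function `S_i` as an element of `C([0,1], ℝ^d)`. -/
noncomputable def SB (d i : ℕ) : C(Set.Icc (0 : ℝ) 1, Fin d → ℝ) :=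
  ⟨fun s => schauder d i s.val, by
    refine continuous_pi fun j => ?_
    by_cases h : (i - 1) % d = (j : ℕ)
    · simp only [schauder, if_pos h]
      exact (continuous_schauderScalar ((i - 1) / d + 1)).comp
        continuous_subtype_val
    · simp only [schauder, if_neg h]
      exact continuous_const⟩

/-!
Both sides are expectations of `F (∑' cᵢ Sᵢ)` for a random coefficient sequence `c`: on the left
`cᵢ = e^{-τᵢ} g0ᵢ + e^{-τᵢ} Wᵢ(e^{2τᵢ} - 1)`, on the right
`cᵢ = g0ᵢ e^{-τᵢ} + (1 - e^{-2τᵢ})^{1/2} ξᵢ`, with `τᵢ = λᵢ t`. In both cases the `cᵢ` are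
independent with the Ornstein–Uhlenbeck marginals `N(g0ᵢ e^{-τᵢ}, 1 - e^{-2τᵢ})`, so the two
sequences have the same law on `ℕ → ℝ`, and `c ↦ F (∑' cᵢ Sᵢ)` is measurable.

Splitting the right-hand series into `T_t X₀` and a random part requires the random part to
converge almost surely. By Borel–Cantelli and Gaussian tails, `|ξᵢ| ≤ log₂ (i / d)` for all large
`i`; and a Schauder series with such coefficients converges uniformly, because at every point only
one Schauder function of each dyadic level `m` is nonzero, and it is bounded by `2^{-m/2}`.
-/

open Filter

/-- The defining formula with `k = n + 1 - 2 ^ m` substituted, free of truncated subtraction. -/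
lemma schauderScalar_succ {n : ℕ} (hn : n ≠ 0) (s : ℝ) :
    schauderScalar (n + 1) s = (2 : ℝ) ^ ((Nat.log 2 n : ℝ) / 2) *
      max 0 (((2 : ℝ) ^ (Nat.log 2 n + 1))⁻¹ -
        |s - ((2 * n + 1) / 2 ^ (Nat.log 2 n + 1) - 1)|) := by
  have hpow : 2 ^ Nat.log 2 n ≤ n + 1 := (Nat.pow_log_le_self 2 hn).trans n.le_succ
  rw [schauderScalar, if_neg (by omega), Nat.add_sub_cancel, Nat.cast_sub hpow,
    rpow_sub_one two_ne_zero, rpow_neg zero_le_two, rpow_natCast]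
  congr 4
  · ring
  · push_cast
    field_simp
    ring

lemma schauderScalar_nonneg (r : ℕ) {s : ℝ} (hs : 0 ≤ s) : 0 ≤ schauderScalar r s := by
  unfold schauderScalar
  split_ifs
  · exact hs
  · positivity

lemma schauderScalar_succ_le {n : ℕ} (hn : n ≠ 0) (s : ℝ) :
    schauderScalar (n + 1) s ≤ (2 : ℝ) ^ (-(Nat.log 2 n : ℝ) / 2) := by
  set m := Nat.log 2 n
  rw [schauderScalar_succ hn]
  calc (2 : ℝ) ^ ((m : ℝ) / 2) * max 0 (((2 : ℝ) ^ (m + 1))⁻¹ - |_|)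
      ≤ (2 : ℝ) ^ ((m : ℝ) / 2) * (2 : ℝ) ^ (-(m : ℝ) - 1) := by
        rw [rpow_sub_one two_ne_zero, rpow_neg zero_le_two, rpow_natCast, pow_succ, mul_inv]
        gcongr
        exact max_le (by positivity) (sub_le_self _ (abs_nonneg _))
    _ ≤ (2 : ℝ) ^ (-(m : ℝ) / 2) := by
        rw [← rpow_add two_pos]
        exact rpow_le_rpow_of_exponent_le one_le_two (by linarith)

/-- Two tents of the same level `m` have half-width `1 / 2 ^ (m + 1)` and centres at least
`2 / 2 ^ (m + 1)` apart. -/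
lemma schauderScalar_succ_eq_zero_or {n₁ n₂ : ℕ} (hn₁ : n₁ ≠ 0) (hn₂ : n₂ ≠ 0)
    (hlog : Nat.log 2 n₁ = Nat.log 2 n₂) (hne : n₁ ≠ n₂) (s : ℝ) :
    schauderScalar (n₁ + 1) s = 0 ∨ schauderScalar (n₂ + 1) s = 0 := by
  rw [schauderScalar_succ hn₁, schauderScalar_succ hn₂, ← hlog]
  set D : ℝ := 2 ^ (Nat.log 2 n₁ + 1)
  have hD : 0 < D := by positivity
  have hdist : 2 / D ≤ |(2 * n₁ + 1) / D - 1 - ((2 * n₂ + 1) / D - 1)| := by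
    have hk : (1 : ℝ) ≤ |(n₁ : ℝ) - n₂| := by
      have hz : (n₁ : ℤ) - n₂ ≠ 0 := sub_ne_zero.2 (by exact_mod_cast hne)
      exact_mod_cast Int.one_le_abs hz
    rw [show (2 * n₁ + 1) / D - 1 - ((2 * n₂ + 1) / D - 1) = 2 * ((n₁ : ℝ) - n₂) / D by ring,
      abs_div, abs_mul, abs_two, abs_of_pos hD]
    gcongr
    linarith
  by_contra! h
  obtain ⟨h₁, h₂⟩ := h
  simp only [ne_eq, mul_eq_zero, rpow_eq_zero_iff_of_nonneg zero_le_two, max_eq_left_iff,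
    not_or, not_le, sub_pos] at h₁ h₂
  have htri := abs_sub_le ((2 * n₁ + 1) / D - 1) s ((2 * n₂ + 1) / D - 1)
  rw [abs_sub_comm _ s] at htri
  linarith [h₁.2, h₂.2, show D⁻¹ + D⁻¹ = 2 / D by ring]

lemma schauder_succ_apply (d i : ℕ) (s : ℝ) (j : Fin d) :
    schauder d (i + 1) s j = if i % d = j then schauderScalar (i / d + 1) s else 0 := by
  simp [schauder]

lemma schauder_nonneg (d i : ℕ) {s : ℝ} (hs : 0 ≤ s) (j : Fin d) : 0 ≤ schauder d i s j := by
  unfold schauder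
  split_ifs
  · exact schauderScalar_nonneg _ hs
  · exact le_rfl

lemma schauder_succ_le {d i : ℕ} (hi : d ≤ i) (s : ℝ) (j : Fin d) :
    schauder d (i + 1) s j ≤ (2 : ℝ) ^ (-(Nat.log 2 (i / d) : ℝ) / 2) := by
  rw [schauder_succ_apply]
  split_ifs
  · exact schauderScalar_succ_le (Nat.div_pos hi j.pos).ne' s
  · positivity

lemma eq_of_schauder_succ_ne_zero {d i₁ i₂ : ℕ} (hi₁ : d ≤ i₁) (hi₂ : d ≤ i₂)
    (hlog : Nat.log 2 (i₁ / d) = Nat.log 2 (i₂ / d)) {s : ℝ} {j : Fin d}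
    (h₁ : schauder d (i₁ + 1) s j ≠ 0) (h₂ : schauder d (i₂ + 1) s j ≠ 0) : i₁ = i₂ := by
  rw [schauder_succ_apply, ite_ne_right_iff] at h₁ h₂
  obtain ⟨hj₁, h₁⟩ := h₁
  obtain ⟨hj₂, h₂⟩ := h₂
  have hdiv : i₁ / d = i₂ / d := by
    by_contra hne
    rcases schauderScalar_succ_eq_zero_or (Nat.div_pos hi₁ j.pos).ne'
      (Nat.div_pos hi₂ j.pos).ne' hlog hne s with h | h
    exacts [h₁ h, h₂ h]
  rw [← Nat.div_add_mod i₁ d, ← Nat.div_add_mod i₂ d, hdiv, hj₁, hj₂]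

lemma sum_schauder_succ_le_of_log_eq {d m : ℕ} {s : Finset ℕ}
    (hs : ∀ i ∈ s, d ≤ i ∧ Nat.log 2 (i / d) = m) (x : ℝ) (j : Fin d) :
    ∑ i ∈ s, schauder d (i + 1) x j ≤ (2 : ℝ) ^ (-(m : ℝ) / 2) := by
  by_cases h : ∃ i ∈ s, schauder d (i + 1) x j ≠ 0
  · obtain ⟨i, hi, hne⟩ := h
    rw [Finset.sum_eq_single_of_mem i hi fun k hk hki => by_contra fun hk' =>
      hki (eq_of_schauder_succ_ne_zero (hs k hk).1 (hs i hi).1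
        ((hs k hk).2.trans (hs i hi).2.symm) hk' hne)]
    exact (hs i hi).2 ▸ schauder_succ_le (hs i hi).1 x j
  · push Not at h
    rw [Finset.sum_eq_zero h]
    positivity

lemma sum_abs_mul_schauder_succ_le {d : ℕ} {t : Finset ℕ} {a : ℕ → ℝ}
    (ht : ∀ i ∈ t, d ≤ i ∧ |a i| ≤ Nat.log 2 (i / d)) {x : ℝ} (hx : 0 ≤ x) (j : Fin d) :
    ∑ i ∈ t, |a i| * schauder d (i + 1) x j ≤
      ∑ m ∈ t.image (fun i => Nat.log 2 (i / d)), (m : ℝ) * (2 : ℝ) ^ (-(m : ℝ) / 2) := by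
  rw [← Finset.sum_fiberwise_of_maps_to (g := fun i => Nat.log 2 (i / d))
    fun i hi => Finset.mem_image_of_mem (fun i => Nat.log 2 (i / d)) hi]
  refine Finset.sum_le_sum fun m _ => ?_
  calc ∑ i ∈ t with Nat.log 2 (i / d) = m, |a i| * schauder d (i + 1) x j
      ≤ ∑ i ∈ t with Nat.log 2 (i / d) = m, (m : ℝ) * schauder d (i + 1) x j := by
        refine Finset.sum_le_sum fun i hi => ?_
        obtain ⟨hit, rfl⟩ := Finset.mem_filter.1 hi
        exact mul_le_mul_of_nonneg_right (ht i hit).2 (schauder_nonneg d _ hx j)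
    _ ≤ (m : ℝ) * (2 : ℝ) ^ (-(m : ℝ) / 2) := by
        rw [← Finset.mul_sum]
        refine mul_le_mul_of_nonneg_left (sum_schauder_succ_le_of_log_eq (fun i hi => ?_) x j)
          m.cast_nonneg
        obtain ⟨hit, hm⟩ := Finset.mem_filter.1 hi
        exact ⟨(ht i hit).1, hm⟩

lemma sum_smul_SB_apply (d : ℕ) (t : Finset ℕ) (a : ℕ → ℝ) (x : Set.Icc (0 : ℝ) 1) (j : Fin d) :
    (∑ i ∈ t, a i • SB d (i + 1)) x j = ∑ i ∈ t, a i * schauder d (i + 1) x j := by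
  simp [SB]

lemma norm_sum_smul_SB_le {d : ℕ} {t : Finset ℕ} {a : ℕ → ℝ} {C : ℝ} (hC : 0 ≤ C)
    (h : ∀ (x : Set.Icc (0 : ℝ) 1) (j : Fin d), ∑ i ∈ t, |a i| * schauder d (i + 1) x j ≤ C) :
    ‖∑ i ∈ t, a i • SB d (i + 1)‖ ≤ C := by
  refine (ContinuousMap.norm_le _ hC).2 fun x => (pi_norm_le_iff_of_nonneg hC).2 fun j => ?_
  rw [Real.norm_eq_abs, sum_smul_SB_apply]
  refine (Finset.abs_sum_le_sum_abs _ _).trans (le_of_eq_of_le ?_ (h x j))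
  refine Finset.sum_congr rfl fun i _ => ?_
  rw [abs_mul, abs_of_nonneg (schauder_nonneg d _ x.2.1 j)]

lemma summable_smul_SB_of_abs_le {d : ℕ} {a b : ℕ → ℝ} (hab : ∀ i, |a i| ≤ b i)
    (hb : Summable fun i => b i • SB d (i + 1)) : Summable fun i => a i • SB d (i + 1) := by
  rw [summable_iff_vanishing_norm] at hb ⊢
  intro ε hε
  obtain ⟨s, hs⟩ := hb ε hε
  refine ⟨s, fun t ht => (norm_sum_smul_SB_le (norm_nonneg _) fun x j => ?_).trans_lt (hs t ht)⟩
  calc ∑ i ∈ t, |a i| * schauder d (i + 1) x j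
      ≤ (∑ i ∈ t, b i • SB d (i + 1)) x j := by
        rw [sum_smul_SB_apply]
        exact Finset.sum_le_sum fun i _ =>
          mul_le_mul_of_nonneg_right (hab i) (schauder_nonneg d _ x.2.1 j)
    _ ≤ ‖∑ i ∈ t, b i • SB d (i + 1)‖ := (Real.le_norm_self _).trans
        ((norm_le_pi_norm _ j).trans (ContinuousMap.norm_coe_le_norm _ x))

lemma summable_nat_mul_two_rpow_neg_div_two :
    Summable fun m : ℕ => (m : ℝ) * (2 : ℝ) ^ (-(m : ℝ) / 2) := by
  have hq : ‖(2 : ℝ) ^ (-(1 : ℝ) / 2)‖ < 1 := by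
    rw [Real.norm_of_nonneg (by positivity)]
    exact rpow_lt_one_of_one_lt_of_neg one_lt_two (by norm_num)
  refine (summable_pow_mul_geometric_of_norm_lt_one 1 hq).congr fun m => ?_
  rw [pow_one, ← rpow_natCast, ← rpow_mul zero_le_two]
  ring_nf

lemma summable_smul_SB_of_eventually_abs_le_log {d : ℕ} {a : ℕ → ℝ}
    (ha : ∀ᶠ i in atTop, |a i| ≤ Nat.log 2 (i / d)) : Summable fun i => a i • SB d (i + 1) := by
  rw [summable_iff_vanishing_norm]
  intro ε hε
  obtain ⟨s₀, hs₀⟩ :=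
    summable_iff_vanishing_norm.1 summable_nat_mul_two_rpow_neg_div_two (ε / 2) (half_pos hε)
  obtain ⟨N, hN⟩ := eventually_atTop.1 ha
  set M := s₀.sup id + 1
  refine ⟨Finset.range (max N (d * 2 ^ M)), fun t ht => ?_⟩
  have hbig : ∀ i ∈ t, N ≤ i ∧ d * 2 ^ M ≤ i := fun i hi => by
    simpa using Finset.disjoint_left.1 ht hi
  refine (norm_sum_smul_SB_le (half_pos hε).le fun x j => ?_).trans_lt (half_lt_self hε)
  have hlev : ∀ i ∈ t, d ≤ i ∧ M ≤ Nat.log 2 (i / d) := fun i hi => by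
    have h := (hbig i hi).2
    refine ⟨le_trans (Nat.le_mul_of_pos_right d (by positivity)) h,
      Nat.le_log_of_pow_le one_lt_two ((Nat.le_div_iff_mul_le j.pos).2 ?_)⟩
    linarith
  refine (sum_abs_mul_schauder_succ_le (fun i hi => ⟨(hlev i hi).1, hN i (hbig i hi).1⟩)
    x.2.1 j).trans ((le_abs_self _).trans (hs₀ _ ?_).le)
  refine Finset.disjoint_left.2 fun m hm hms₀ => ?_
  obtain ⟨i, hi, rfl⟩ := Finset.mem_image.1 hm
  exact (hlev i hi).2.not_gt (Nat.lt_succ_of_le (Finset.le_sup (f := id) hms₀))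

lemma gaussianReal_real_le_abs_le (a : ℝ) :
    (gaussianReal 0 1).real {x | a ≤ |x|} ≤ 2 * exp (1 / 2) * exp (-a) := by
  have hright := measure_ge_le_exp_mul_mgf (X := id) (μ := gaussianReal 0 1) a zero_le_one
    (integrable_exp_mul_gaussianReal 1)
  have hleft := measure_le_le_exp_mul_mgf (X := id) (μ := gaussianReal 0 1) (-a)
    (neg_nonpos.2 zero_le_one) (integrable_exp_mul_gaussianReal (-1))
  simp only [mgf_id_gaussianReal, id] at hright hleft
  calc (gaussianReal 0 1).real {x | a ≤ |x|}
      ≤ (gaussianReal 0 1).real ({x | a ≤ x} ∪ {x | x ≤ -a}) :=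
        measureReal_mono fun x (hx : a ≤ |x|) => by
          rcases le_abs'.1 hx with h | h
          exacts [Or.inr h, Or.inl h]
    _ ≤ (gaussianReal 0 1).real {x | a ≤ x} + (gaussianReal 0 1).real {x | x ≤ -a} :=
        measureReal_union_le _ _
    _ ≤ 2 * exp (1 / 2) * exp (-a) := by
        refine (add_le_add hright hleft).trans_eq ?_
        norm_num
        ring

section

variable {Ω : Type*} [MeasurableSpace Ω] {P : Measure Ω}

lemma tsum_measure_biUnion_abs_gt_ne_top {ξ : ℕ → Ω → ℝ}
    (hξ : ∀ i, HasLaw (ξ i) (gaussianReal 0 1) P) (d : ℕ) :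
    ∑' m : ℕ, P (⋃ i ∈ Finset.range (d * 2 ^ (m + 1)), {ω | (m : ℝ) < |ξ i ω|}) ≠ ⊤ := by
  set b : ℕ → ℝ := fun m => d * 2 ^ (m + 1) * (2 * exp (1 / 2) * exp (-m))
  have hE (m : ℕ) : P (⋃ i ∈ Finset.range (d * 2 ^ (m + 1)), {ω | (m : ℝ) < |ξ i ω|}) ≤
      ENNReal.ofReal (b m) := by
    refine (measure_biUnion_finset_le _ _).trans ?_
    calc ∑ i ∈ Finset.range (d * 2 ^ (m + 1)), P {ω | (m : ℝ) < |ξ i ω|}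
        ≤ ∑ i ∈ Finset.range (d * 2 ^ (m + 1)), ENNReal.ofReal (2 * exp (1 / 2) * exp (-m)) := by
          refine Finset.sum_le_sum fun i _ => ?_
          rw [(hξ i).measure_eq (measurableSet_lt measurable_const measurable_abs),
            ← ofReal_measureReal]
          exact ENNReal.ofReal_le_ofReal ((measureReal_mono fun x (hx : (m : ℝ) < |x|) =>
            hx.le).trans (gaussianReal_real_le_abs_le m))
      _ = ENNReal.ofReal (b m) := by
          rw [Finset.sum_const, Finset.card_range, nsmul_eq_mul, ← ENNReal.ofReal_natCast,
            ← ENNReal.ofReal_mul (Nat.cast_nonneg _)]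
          push_cast
          rfl
  have hb : Summable b := by
    have hr : ‖2 * exp (-1)‖ < 1 := by
      rw [Real.norm_of_nonneg (by positivity), exp_neg, ← div_eq_mul_inv,
        div_lt_one (exp_pos 1)]
      linarith [add_one_lt_exp one_ne_zero]
    refine ((summable_geometric_of_norm_lt_one hr).mul_left (4 * d * exp (1 / 2))).congr
      fun m => ?_
    simp only [b, mul_pow, ← exp_nat_mul, pow_succ]
    ring_nf
  exact ne_top_of_le_ne_top ENNReal.ofReal_ne_top <| (ENNReal.tsum_le_tsum hE).trans_eq
    (ENNReal.ofReal_tsum_of_nonneg (fun m => by positivity) hb).symm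

lemma ae_eventually_abs_le_log {ξ : ℕ → Ω → ℝ} (hξ : ∀ i, HasLaw (ξ i) (gaussianReal 0 1) P)
    {d : ℕ} (hd : 0 < d) : ∀ᵐ ω ∂P, ∀ᶠ i in atTop, |ξ i ω| ≤ Nat.log 2 (i / d) := by
  filter_upwards [ae_eventually_notMem (tsum_measure_biUnion_abs_gt_ne_top hξ d)] with ω hω
  obtain ⟨M, hM⟩ := eventually_atTop.1 hω
  filter_upwards [eventually_ge_atTop (d * 2 ^ M)] with i hi
  have hlev : M ≤ Nat.log 2 (i / d) :=
    Nat.le_log_of_pow_le one_lt_two ((Nat.le_div_iff_mul_le hd).2 (by linarith))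
  have hi' : i < d * 2 ^ (Nat.log 2 (i / d) + 1) := by
    rw [mul_comm]
    exact (Nat.div_lt_iff_lt_mul hd).1 (Nat.lt_pow_succ_log_self one_lt_two _)
  by_contra h
  exact hM _ hlev (Set.mem_biUnion (Finset.mem_range.2 hi') (not_le.1 h))

lemma ae_summable_smul_SB {ξ : ℕ → Ω → ℝ} (hξ : ∀ i, HasLaw (ξ i) (gaussianReal 0 1) P)
    {d : ℕ} (hd : 0 < d) {σ : ℕ → ℝ} (hσ : ∀ i, |σ i| ≤ 1) :
    ∀ᵐ ω ∂P, Summable fun i => (σ i * ξ i ω) • SB d (i + 1) := by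
  filter_upwards [ae_eventually_abs_le_log hξ hd] with ω hω
  refine summable_smul_SB_of_eventually_abs_le_log (hω.mono fun i hi => ?_)
  rw [abs_mul]
  exact (mul_le_of_le_one_left (abs_nonneg _) (hσ i)).trans hi

lemma hasLaw_of_map_eq {𝓧 : Type*} [MeasurableSpace 𝓧] {X : Ω → 𝓧} {μ : Measure 𝓧} [NeZero μ]
    (h : P.map X = μ) : HasLaw X μ P :=
  ⟨aemeasurable_of_map_neZero (h ▸ inferInstance), h⟩

lemma IsStdBM.hasLaw {W : ℝ → Ω → ℝ} (hW : IsStdBM P W) {s : ℝ} (hs : 0 ≤ s) :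
    HasLaw (W s) (gaussianReal 0 s.toNNReal) P := by
  have h := hW.2.2.1 0 s le_rfl hs
  simp only [hW.1, sub_zero] at h
  exact hasLaw_of_map_eq h

/-- The law at time `τ` of the Ornstein–Uhlenbeck process `dX = -X dt + √2 dW` started at `x`. -/
noncomputable def ouTransition (x τ : ℝ) : Measure ℝ :=
  gaussianReal (x * exp (-τ)) (1 - exp (-2 * τ)).toNNReal

instance (x τ : ℝ) : IsProbabilityMeasure (ouTransition x τ) := by
  unfold ouTransition
  infer_instance

lemma hasLaw_ouTransition_of_isStdBM {W : ℝ → Ω → ℝ} (hW : IsStdBM P W) (x : ℝ) {τ : ℝ}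
    (hτ : 0 ≤ τ) :
    HasLaw (fun ω => exp (-τ) * x + exp (-τ) * W (exp (2 * τ) - 1) ω) (ouTransition x τ) P := by
  have hs : 0 ≤ exp (2 * τ) - 1 := by linarith [one_le_exp (by linarith : 0 ≤ 2 * τ)]
  rw [ouTransition]
  convert gaussianReal_const_add (gaussianReal_const_mul (hW.hasLaw hs) (exp (-τ)))
    (exp (-τ) * x) using 2
  · ring
  · rw [← NNReal.coe_inj, NNReal.coe_mul, NNReal.coe_mk, Real.coe_toNNReal _ hs,
      Real.coe_toNNReal _ (by linarith [exp_le_one_iff.2 (by linarith : -2 * τ ≤ 0)]),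
      ← exp_nat_mul, mul_sub, ← exp_add]
    norm_num

lemma hasLaw_ouTransition_of_gaussian {ξ : Ω → ℝ} (hξ : HasLaw ξ (gaussianReal 0 1) P) (x : ℝ)
    {τ : ℝ} (hτ : 0 ≤ τ) :
    HasLaw (fun ω => x * exp (-τ) + √(1 - exp (-2 * τ)) * ξ ω) (ouTransition x τ) P := by
  have hv : 0 ≤ 1 - exp (-2 * τ) := by linarith [exp_le_one_iff.2 (by linarith : -2 * τ ≤ 0)]
  rw [ouTransition]
  convert gaussianReal_const_add (gaussianReal_const_mul hξ √(1 - exp (-2 * τ)))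
    (x * exp (-τ)) using 2
  · ring
  · rw [← NNReal.coe_inj, NNReal.coe_mul, NNReal.coe_mk, Real.coe_toNNReal _ hv, sq_sqrt hv,
      NNReal.coe_one, mul_one]

lemma integral_comp_tsum_smul_eq_of_hasLaw {Ω' E : Type*} [MeasurableSpace Ω'] {Q : Measure Ω'}
    [NormedAddCommGroup E] [NormedSpace ℝ E] [CompleteSpace E] [SecondCountableTopology E]
    [MeasurableSpace E] [BorelSpace E] (f : ℕ → E) {F : E → ℝ} (hF : Measurable F)
    {μ : Measure (ℕ → ℝ)} {u : ℕ → Ω → ℝ} {v : ℕ → Ω' → ℝ} (hu : HasLaw (fun ω i => u i ω) μ P)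
    (hv : HasLaw (fun ω i => v i ω) μ Q) :
    ∫ ω, F (∑' i, u i ω • f i) ∂P = ∫ ω, F (∑' i, v i ω • f i) ∂Q := by
  have hH : Measurable fun c : ℕ → ℝ => F (∑' i, c i • f i) :=
    hF.comp (Measurable.tsum fun i => (measurable_pi_apply i).smul_const (f i))
  exact (hu.integral_comp hH.aestronglyMeasurable).trans
    (hv.integral_comp hH.aestronglyMeasurable).symm

lemma hasLaw_infinitePi_ouTransition_of_isStdBM [IsProbabilityMeasure P] {W : ℕ → ℝ → Ω → ℝ}
    (hW : ∀ i, IsStdBM P (W i)) (hindep : iIndepFun (fun i ω t => W i t ω) P) (x τ : ℕ → ℝ)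
    (hτ : ∀ i, 0 ≤ τ i) :
    HasLaw (fun ω i => exp (-τ i) * x i + exp (-τ i) * W i (exp (2 * τ i) - 1) ω)
      (Measure.infinitePi fun i => ouTransition (x i) (τ i)) P := by
  have hlaw i := hasLaw_ouTransition_of_isStdBM (hW i) (x i) (hτ i)
  refine (hindep.comp (fun i f => exp (-τ i) * x i + exp (-τ i) * f (exp (2 * τ i) - 1))
    fun i => by fun_prop).hasLaw_infinitePi hlaw ?_
  exact aemeasurable_pi_lambda _ fun i => (hlaw i).aemeasurable

lemma hasLaw_infinitePi_ouTransition_of_gaussian [IsProbabilityMeasure P] {ξ : ℕ → Ω → ℝ}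
    (hindep : iIndepFun ξ P) (hξ : ∀ i, HasLaw (ξ i) (gaussianReal 0 1) P) (x τ : ℕ → ℝ)
    (hτ : ∀ i, 0 ≤ τ i) :
    HasLaw (fun ω i => x i * exp (-τ i) + √(1 - exp (-2 * τ i)) * ξ i ω)
      (Measure.infinitePi fun i => ouTransition (x i) (τ i)) P := by
  have hlaw i := hasLaw_ouTransition_of_gaussian (hξ i) (x i) (hτ i)
  refine (hindep.comp (fun i y => x i * exp (-τ i) + √(1 - exp (-2 * τ i)) * y)
    fun i => by fun_prop).hasLaw_infinitePi hlaw ?_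
  exact aemeasurable_pi_lambda _ fun i => (hlaw i).aemeasurable

end

theorem mehler_representation_general {Ω Ω' : Type*} [MeasurableSpace Ω] [MeasurableSpace Ω']
    (P : Measure Ω) (Q : Measure Ω') [IsProbabilityMeasure P] [IsProbabilityMeasure Q]
    (d : ℕ) (hd : 0 < d)
    (lam : ℕ → ℝ) (hpos : ∀ i, 0 < lam i)
    (W : ℕ → ℝ → Ω → ℝ) (hBM : ∀ i, IsStdBM P (W i))
    (hindep : iIndepFun
      (fun i ω t => W i t ω) P)
    (g0 : ℕ → ℝ)
    (hconv : Summable fun i : ℕ => |g0 (i + 1)| • SB d (i + 1))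
    (G : ℕ → ℝ → Ω → ℝ)
    (hG : ∀ i t ω, G i t ω
      = Real.exp (-t) * g0 i + Real.exp (-t) * W i (Real.exp (2 * t) - 1) ω)
    (ξ : ℕ → Ω' → ℝ)
    (hξindep : iIndepFun ξ Q)
    (hξlaw : ∀ i, Measure.map (ξ i) Q = gaussianReal 0 1) :
    ∀ t : ℝ, 0 < t → ∀ F : C(Set.Icc (0 : ℝ) 1, Fin d → ℝ) → ℝ,
      Continuous F → (∃ M : ℝ, ∀ x, |F x| ≤ M) →
      ∫ ω, F (∑' i : ℕ, G (i + 1) (lam (i + 1) * t) ω • SB d (i + 1)) ∂P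
        = ∫ ω', F ((∑' i : ℕ, (g0 (i + 1) * Real.exp (-(lam (i + 1) * t))) • SB d (i + 1)) +
            ∑' i : ℕ, (Real.sqrt (1 - Real.exp (-2 * lam (i + 1) * t)) * ξ i ω') •
              SB d (i + 1)) ∂Q := by
  intro t ht F hF _
  obtain rfl : G = fun i t ω => exp (-t) * g0 i + exp (-t) * W i (exp (2 * t) - 1) ω :=
    funext fun i => funext fun s => funext fun ω => hG i s ω
  borelize C(Set.Icc (0 : ℝ) 1, Fin d → ℝ)
  have hτ i : 0 ≤ lam (i + 1) * t := (mul_pos (hpos _) ht).le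
  have hξ i : HasLaw (ξ i) (gaussianReal 0 1) Q := hasLaw_of_map_eq (hξlaw i)
  have hdet : Summable fun i => (g0 (i + 1) * exp (-(lam (i + 1) * t))) • SB d (i + 1) := by
    refine summable_smul_SB_of_abs_le (fun i => ?_) hconv
    rw [abs_mul, abs_exp]
    exact mul_le_of_le_one_right (abs_nonneg _) (exp_le_one_iff.2 (neg_nonpos.2 (hτ i)))
  have hrand := ae_summable_smul_SB hξ hd
    (σ := fun i => √(1 - exp (-2 * (lam (i + 1) * t)))) fun i => by
      rw [abs_of_nonneg (sqrt_nonneg _), sqrt_le_one]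
      linarith [exp_pos (-2 * (lam (i + 1) * t))]
  simp only [mul_assoc (-2 : ℝ)]
  rw [integral_comp_tsum_smul_eq_of_hasLaw (fun i => SB d (i + 1)) hF.measurable
    (hasLaw_infinitePi_ouTransition_of_isStdBM (fun i => hBM (i + 1))
      (hindep.precomp Nat.succ_injective) (fun i => g0 (i + 1)) (fun i => lam (i + 1) * t) hτ)
    (hasLaw_infinitePi_ouTransition_of_gaussian hξindep hξ (fun i => g0 (i + 1))
      (fun i => lam (i + 1) * t) hτ)]
  refine integral_congr_ae (hrand.mono fun ω hω => ?_)
  simp only [add_smul, hdet.tsum_add hω]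

/-- Mehler semigroup representation: under the assumptions guaranteeing
a.s. convergence of `X_t = ∑ G_i(λ_i t) S_i` with deterministic initial values,
`E_{X₀}[F(X_t)] = ∫ F(T_t X₀ + y) μ_t(dy)` for all `t > 0` and bounded continuous `F`,
where `T_t X₀ = ∑ G_i(0) e^{-λ_i t} S_i` and `μ_t` is the image of the Wiener measure
under `U_t(∑ y_i S_i) = ∑ y_i (1-e^{-2λ_i t})^{1/2} S_i`; via the Lévy–Ciesielski
representation, the Schauder coefficients `(y_i)` of a Brownian path under the Wiener
measure are i.i.d. standard normal variables `ξ_i` on an auxiliary space `(Ω', Q)`. -/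
theorem mehler_representation {Ω Ω' : Type*} [MeasurableSpace Ω] [MeasurableSpace Ω']
    (P : Measure Ω) (Q : Measure Ω') [IsProbabilityMeasure P] [IsProbabilityMeasure Q]
    (d : ℕ) (hd : 0 < d)
    (lam : ℕ → ℝ) (hpos : ∀ i, 0 < lam i) (hmono : Monotone lam)
    (W : ℕ → ℝ → Ω → ℝ) (hBM : ∀ i, IsStdBM P (W i))
    (hindep : iIndepFun
      (fun i ω t => W i t ω) P)
    (g0 : ℕ → ℝ)
    (hconv : Summable fun i : ℕ => |g0 (i + 1)| • SB d (i + 1))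
    (G : ℕ → ℝ → Ω → ℝ)
    (hG : ∀ i t ω, G i t ω
      = Real.exp (-t) * g0 i + Real.exp (-t) * W i (Real.exp (2 * t) - 1) ω)
    (ξ : ℕ → Ω' → ℝ)
    (hξindep : iIndepFun ξ Q)
    (hξlaw : ∀ i, Measure.map (ξ i) Q = gaussianReal 0 1) :
    ∀ t : ℝ, 0 < t → ∀ F : C(Set.Icc (0 : ℝ) 1, Fin d → ℝ) → ℝ,
      Continuous F → (∃ M : ℝ, ∀ x, |F x| ≤ M) →
      ∫ ω, F (∑' i : ℕ, G (i + 1) (lam (i + 1) * t) ω • SB d (i + 1)) ∂P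
        = ∫ ω', F ((∑' i : ℕ, (g0 (i + 1) * Real.exp (-(lam (i + 1) * t))) • SB d (i + 1)) +
            ∑' i : ℕ, (Real.sqrt (1 - Real.exp (-2 * lam (i + 1) * t)) * ξ i ω') •
              SB d (i + 1)) ∂Q :=
  mehler_representation_general P Q d hd lam hpos W hBM hindep g0 hconv G hG ξ hξindep hξlaw
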